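/- arXiv:2103.00665 — 2 statements merged into one kernel-verified Lean document; each statement's English description precedes it below -/
import Mathlib

section
/- Let φ: A → B be a surjective homomorphism of abelian groups, f: 𝔤 → 𝔤̃ a homomorphism of B-graded Lie superalgebras, and (𝔭, Π'), (𝔭̃, Π̃') φ-coverings of 𝔤 and 𝔤̃ respectively. Then there exists a unique A-graded Lie superalgebra homomorphism F: 𝔭 → 𝔭̃ with Π̃' ∘ F = f ∘ Π'. In particular, φ-coverings of a B-graded Lie superalgebra are unique up to isomorphism. -/
/-- The sign `(-1)^{ij}` for parities `i j : ℤ₂`, as an element of `K`. -/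
def ssign (K : Type*) [Field K] (i j : ZMod 2) : K := if i = 1 ∧ j = 1 then -1 else 1

/-- An `A`-graded Lie superalgebra over `K`, where `A` is an abelian group and the
parities are governed by a group homomorphism `δ : A → ℤ₂`: a grading `p` of the
carrier `L` by submodules whose internal direct sum is `L`, and a bilinear bracket `br`
with `[p a, p b] ⊆ p (a+b)`, super skew-symmetry and the super Jacobi identity
(signs `(-1)^{δ(a)δ(b)}`). -/
structure IsGradedLieSuperAlg (K : Type*) [Field K] {A : Type*} [AddCommGroup A]
    [DecidableEq A] {L : Type*} [AddCommGroup L] [Module K L]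
    (δ : A →+ ZMod 2) (p : A → Submodule K L) (br : L → L → L) : Prop where
  add_left : ∀ x x' y, br (x + x') y = br x y + br x' y
  smul_left : ∀ (c : K) x y, br (c • x) y = c • br x y
  add_right : ∀ x y y', br x (y + y') = br x y + br x y'
  smul_right : ∀ (c : K) x y, br x (c • y) = c • br x y
  internal : DirectSum.IsInternal p
  grade : ∀ a b, ∀ x ∈ p a, ∀ y ∈ p b, br x y ∈ p (a + b)
  skew : ∀ a b, ∀ x ∈ p a, ∀ y ∈ p b, br x y = - ssign K (δ a) (δ b) • br y x
  jacobi : ∀ a b, ∀ x ∈ p a, ∀ y ∈ p b, ∀ z,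
    br x (br y z) - ssign K (δ a) (δ b) • br y (br x z) = br (br x y) z

structure IsCovering (K : Type*) [Field K] {A B : Type*} [AddCommGroup A] [AddCommGroup B]
    {P G : Type*} [AddCommGroup P] [Module K P] [AddCommGroup G] [Module K G]
    (φ : A →+ B) (p : A → Submodule K P) (brp : P → P → P)
    (q : B → Submodule K G) (brg : G → G → G) (prj : P →ₗ[K] G) : Prop where
  hom : ∀ x y, prj (brp x y) = brg (prj x) (prj y)
  maps : ∀ a, ∀ x ∈ p a, prj x ∈ q (φ a)
  inj : ∀ a, ∀ x ∈ p a, prj x = 0 → x = 0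
  surj : ∀ a, ∀ y ∈ q (φ a), ∃ x ∈ p a, prj x = y

/-!
Since `Π̃'` restricts to isomorphisms `𝔭̃_a ≅ 𝔤̃_{φ a}`, the map `F` is forced on every
homogeneous component to be `(Π̃'|_{𝔭̃_a})⁻¹ ∘ f ∘ Π'`, and this determines it on the direct
sum `𝔭`. It respects brackets because for homogeneous `x ∈ 𝔭_a`, `y ∈ 𝔭_b` both `F [x, y]` and
`[F x, F y]` lie in `𝔭̃_{a+b}` and have the same image `f [Π' x, Π' y]` under `Π̃'`.
-/

section InternalDirectSum

variable {R ι M N Q : Type*} [CommRing R] [AddCommGroup M] [Module R M]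
  [AddCommGroup N] [Module R N] [AddCommGroup Q] [Module R Q]

theorem LinearMap.ext_of_iSup_eq_top {p : ι → Submodule R M} (hp : ⨆ i, p i = ⊤)
    {f g : M →ₗ[R] Q} (h : ∀ i, ∀ x ∈ p i, f x = g x) : f = g := by
  refine LinearMap.ext_on (s := ⋃ i, (p i : Set M)) ?_ ?_
  · rw [← Submodule.iSup_eq_span, hp]
  · intro x hx
    obtain ⟨i, hi⟩ := Set.mem_iUnion.mp hx
    exact h i x hi

theorem LinearMap.ext₂_of_iSup_eq_top {p : ι → Submodule R M} (hp : ⨆ i, p i = ⊤)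
    {κ : Type*} {q : κ → Submodule R N} (hq : ⨆ j, q j = ⊤) {f g : M →ₗ[R] N →ₗ[R] Q}
    (h : ∀ i j, ∀ x ∈ p i, ∀ y ∈ q j, f x y = g x y) : f = g :=
  LinearMap.ext_of_iSup_eq_top hp fun i x hx =>
    LinearMap.ext_of_iSup_eq_top hq fun j y hy => h i j x hx y hy

variable [DecidableEq ι] {p : ι → Submodule R M}

noncomputable def DirectSum.IsInternal.lift (h : DirectSum.IsInternal p)
    (F : ∀ i, p i →ₗ[R] Q) : M →ₗ[R] Q :=
  DirectSum.toModule R ι Q F ∘ₗ (LinearEquiv.ofBijective (DirectSum.coeLinearMap p) h).symm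

theorem DirectSum.IsInternal.lift_apply_of_mem (h : DirectSum.IsInternal p)
    (F : ∀ i, p i →ₗ[R] Q) {i : ι} {x : M} (hx : x ∈ p i) : h.lift F x = F i ⟨x, hx⟩ := by
  have hsymm : (LinearEquiv.ofBijective (DirectSum.coeLinearMap p) h).symm x =
      DirectSum.lof R ι (fun i => p i) i ⟨x, hx⟩ := by
    rw [LinearEquiv.symm_apply_eq]
    exact (DirectSum.coeLinearMap_lof p i ⟨x, hx⟩).symm
  rw [DirectSum.IsInternal.lift, LinearMap.comp_apply, LinearEquiv.coe_coe, hsymm,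
    DirectSum.toModule_lof]

end InternalDirectSum

namespace IsGradedLieSuperAlg

variable {K A L : Type*} [Field K] [AddCommGroup A] [DecidableEq A] [AddCommGroup L] [Module K L]
  {δ : A →+ ZMod 2} {p : A → Submodule K L} {br : L → L → L}

def bracket (h : IsGradedLieSuperAlg K δ p br) : L →ₗ[K] L →ₗ[K] L :=
  LinearMap.mk₂ K br h.add_left h.smul_left h.add_right h.smul_right

end IsGradedLieSuperAlg

namespace IsCovering

variable {K A B P G P' G' : Type*} [Field K] [AddCommGroup A] [AddCommGroup B]
  [AddCommGroup P] [Module K P] [AddCommGroup G] [Module K G]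
  [AddCommGroup P'] [Module K P'] [AddCommGroup G'] [Module K G']
  {φ : A →+ B} {p : A → Submodule K P} {brp : P → P → P} {q : B → Submodule K G}
  {brg : G → G → G} {prj : P →ₗ[K] G}
  {p' : A → Submodule K P'} {brp' : P' → P' → P'} {q' : B → Submodule K G'}
  {brg' : G' → G' → G'} {prj' : P' →ₗ[K] G'}

theorem eq_of_prj_eq (hcov : IsCovering K φ p brp q brg prj) {a : A} {x y : P}
    (hx : x ∈ p a) (hy : y ∈ p a) (h : prj x = prj y) : x = y :=
  sub_eq_zero.mp (hcov.inj a _ (sub_mem hx hy) (by rw [map_sub, h, sub_self]))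

noncomputable def gradeEquiv (hcov : IsCovering K φ p brp q brg prj) (a : A) :
    p a ≃ₗ[K] q (φ a) :=
  LinearEquiv.ofBijective
    (LinearMap.codRestrict (q (φ a)) (prj ∘ₗ (p a).subtype) fun x => hcov.maps a x.1 x.2)
    ⟨fun x y hxy => Subtype.ext (hcov.eq_of_prj_eq x.2 y.2 (congrArg Subtype.val hxy)),
      fun y => by
        obtain ⟨x, hx, hxy⟩ := hcov.surj a y.1 y.2
        exact ⟨⟨x, hx⟩, Subtype.ext hxy⟩⟩

theorem prj_gradeEquiv_symm (hcov : IsCovering K φ p brp q brg prj) (a : A) (y : q (φ a)) :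
    prj ((hcov.gradeEquiv a).symm y) = y :=
  congrArg Subtype.val ((hcov.gradeEquiv a).apply_symm_apply y)

theorem exists_graded_lift [DecidableEq A] (hint : DirectSum.IsInternal p)
    (hcov : IsCovering K φ p brp q brg prj) (hcov' : IsCovering K φ p' brp' q' brg' prj')
    (f : G →ₗ[K] G') (hf : ∀ b, ∀ y ∈ q b, f y ∈ q' b) :
    ∃ F : P →ₗ[K] P', (∀ a, ∀ x ∈ p a, F x ∈ p' a) ∧ ∀ x, prj' (F x) = f (prj x) := by
  let fa : ∀ a, p a →ₗ[K] q' (φ a) := fun a =>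
    LinearMap.codRestrict _ (f ∘ₗ prj ∘ₗ (p a).subtype) fun x => hf _ _ (hcov.maps a x.1 x.2)
  let F := hint.lift fun a => (p' a).subtype ∘ₗ (hcov'.gradeEquiv a).symm.toLinearMap ∘ₗ fa a
  have hF : ∀ a x (hx : x ∈ p a), F x = (hcov'.gradeEquiv a).symm (fa a ⟨x, hx⟩) :=
    fun a x hx => hint.lift_apply_of_mem _ hx
  refine ⟨F, fun a x hx => hF a x hx ▸ Submodule.coe_mem _, fun x => ?_⟩
  suffices prj' ∘ₗ F = f ∘ₗ prj from LinearMap.congr_fun this x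
  refine LinearMap.ext_of_iSup_eq_top hint.submodule_iSup_eq_top fun a x hx => ?_
  rw [LinearMap.comp_apply, hF a x hx, prj_gradeEquiv_symm]
  rfl

theorem eq_of_graded_of_prj_eq (hcov' : IsCovering K φ p' brp' q' brg' prj')
    (htop : ⨆ a, p a = ⊤) {F F' : P →ₗ[K] P'} (hF : ∀ a, ∀ x ∈ p a, F x ∈ p' a)
    (hF' : ∀ a, ∀ x ∈ p a, F' x ∈ p' a) (h : ∀ x, prj' (F x) = prj' (F' x)) : F = F' :=
  LinearMap.ext_of_iSup_eq_top htop fun a x hx =>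
    hcov'.eq_of_prj_eq (hF a x hx) (hF' a x hx) (h x)

theorem map_bracket_of_graded_lift [DecidableEq A] {δ : A →+ ZMod 2}
    (hp : IsGradedLieSuperAlg K δ p brp) (hp' : IsGradedLieSuperAlg K δ p' brp')
    (hcov : IsCovering K φ p brp q brg prj) (hcov' : IsCovering K φ p' brp' q' brg' prj')
    {f : G →ₗ[K] G'} (hf : ∀ x y, f (brg x y) = brg' (f x) (f y)) {F : P →ₗ[K] P'}
    (hF : ∀ a, ∀ x ∈ p a, F x ∈ p' a) (hFprj : ∀ x, prj' (F x) = f (prj x)) (x y : P) :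
    F (brp x y) = brp' (F x) (F y) := by
  suffices hp.bracket.compr₂ F = hp'.bracket.compl₁₂ F F from LinearMap.congr_fun₂ this x y
  have htop := hp.internal.submodule_iSup_eq_top
  refine LinearMap.ext₂_of_iSup_eq_top htop htop fun a b x hx y hy => ?_
  refine hcov'.eq_of_prj_eq (hF _ _ (hp.grade a b x hx y hy))
    (hp'.grade a b _ (hF a x hx) _ (hF b y hy)) ?_
  change prj' (F (brp x y)) = prj' (brp' (F x) (F y))
  rw [hFprj, hcov.hom, hf, ← hFprj, ← hFprj, ← hcov'.hom]

end IsCovering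

namespace Stmt13

theorem covering_functorial_general
    {K : Type*} [Field K] {A B : Type*} [AddCommGroup A] [AddCommGroup B]
    [DecidableEq A]
    {P G P' G' : Type*} [AddCommGroup P] [Module K P] [AddCommGroup G] [Module K G]
    [AddCommGroup P'] [Module K P'] [AddCommGroup G'] [Module K G']
    (δ : B →+ ZMod 2) (φ : A →+ B)
    (q : B → Submodule K G) (brg : G → G → G)
    (q' : B → Submodule K G') (brg' : G' → G' → G')
    (p : A → Submodule K P) (brp : P → P → P)
    (hp : IsGradedLieSuperAlg K (δ.comp φ) p brp)
    (prj : P →ₗ[K] G) (hcov : IsCovering K φ p brp q brg prj)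
    (p' : A → Submodule K P') (brp' : P' → P' → P')
    (hp' : IsGradedLieSuperAlg K (δ.comp φ) p' brp')
    (prj' : P' →ₗ[K] G') (hcov' : IsCovering K φ p' brp' q' brg' prj')
    (f : G →ₗ[K] G')
    (hfhom : ∀ x y, f (brg x y) = brg' (f x) (f y))
    (hfgr : ∀ b : B, ∀ y ∈ q b, f y ∈ q' b) :
    ∃! F : P →ₗ[K] P',
      (∀ a : A, ∀ x ∈ p a, F x ∈ p' a) ∧
      (∀ x y, F (brp x y) = brp' (F x) (F y)) ∧
      (∀ x, prj' (F x) = f (prj x)) := by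
  obtain ⟨F, hF_grade, hF_prj⟩ := hcov.exists_graded_lift hp.internal hcov' f hfgr
  refine ⟨F, ⟨hF_grade, hcov.map_bracket_of_graded_lift hp hp' hcov' hfhom hF_grade hF_prj,
    hF_prj⟩, ?_⟩
  rintro F' ⟨hF'_grade, -, hF'_prj⟩
  exact hcov'.eq_of_graded_of_prj_eq hp.internal.submodule_iSup_eq_top hF'_grade hF_grade
    fun x => (hF'_prj x).trans (hF_prj x).symm

/-- Let `φ : A → B` be a surjective homomorphism of abelian groups,
`f : 𝔤 → 𝔤̃` a homomorphism of `B`-graded Lie superalgebras, and `(𝔭, Π')`, `(𝔭̃, Π̃')`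
`φ`-coverings of `𝔤` and `𝔤̃` respectively.  Then there exists a unique `A`-graded Lie
superalgebra homomorphism `F : 𝔭 → 𝔭̃` with `Π̃' ∘ F = f ∘ Π'`.  (In particular,
`φ`-coverings of a `B`-graded Lie superalgebra are unique up to isomorphism.) -/
theorem covering_functorial
    {K : Type*} [Field K] {A B : Type*} [AddCommGroup A] [AddCommGroup B]
    [DecidableEq A] [DecidableEq B]
    {P G P' G' : Type*} [AddCommGroup P] [Module K P] [AddCommGroup G] [Module K G]
    [AddCommGroup P'] [Module K P'] [AddCommGroup G'] [Module K G']
    (δ : B →+ ZMod 2) (φ : A →+ B) (hφ : Function.Surjective φ)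
    (q : B → Submodule K G) (brg : G → G → G)
    (hg : IsGradedLieSuperAlg K δ q brg)
    (q' : B → Submodule K G') (brg' : G' → G' → G')
    (hg' : IsGradedLieSuperAlg K δ q' brg')
    (p : A → Submodule K P) (brp : P → P → P)
    (hp : IsGradedLieSuperAlg K (δ.comp φ) p brp)
    (prj : P →ₗ[K] G) (hcov : IsCovering K φ p brp q brg prj)
    (p' : A → Submodule K P') (brp' : P' → P' → P')
    (hp' : IsGradedLieSuperAlg K (δ.comp φ) p' brp')
    (prj' : P' →ₗ[K] G') (hcov' : IsCovering K φ p' brp' q' brg' prj')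
    (f : G →ₗ[K] G')
    (hfhom : ∀ x y, f (brg x y) = brg' (f x) (f y))
    (hfgr : ∀ b : B, ∀ y ∈ q b, f y ∈ q' b) :
    ∃! F : P →ₗ[K] P',
      (∀ a : A, ∀ x ∈ p a, F x ∈ p' a) ∧
      (∀ x y, F (brp x y) = brp' (F x) (F y)) ∧
      (∀ x, prj' (F x) = f (prj x)) :=
  covering_functorial_general δ φ q brg q' brg' p brp hp prj hcov p' brp' hp' prj' hcov' f hfhom
    hfgr

end Stmt13
end

section
/- Let φ: A → B be a surjective homomorphism of abelian groups, C ⊆ A a subset with φ(C) = B, and (𝔭, Π') a φ-semicovering of a B-graded Lie superalgebra 𝔤 with support C. If 𝔞 is an A-graded Lie superalgebra with supp(𝔞) ⊆ C and ψ: 𝔞 → 𝔤 is a B-graded homomorphism, then there exists a unique A-graded homomorphism Ψ: 𝔞 → 𝔭 with Π' ∘ Ψ = ψ. (In particular for X ∈ 𝔞_s, Y ∈ 𝔞_t with s, t ∈ C but s+t ∉ C, both [Ψ(X),Ψ(Y)] and Ψ([X,Y]) vanish.) -/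
/-- A `φ`-semicovering with support `C` of a `B`-graded Lie superalgebra `(G, q, brg)`
along a surjective homomorphism `φ : A → B` (with `φ(C) = B`): an `A`-graded Lie
superalgebra `(P, p, brp)` with `supp(𝔭) = C`, together with a surjective linear map
`prj : P → G` which is a *partial homomorphism* (it intertwines brackets whenever
`α, β, α+β ∈ C`) and restricts to a linear bijection `p a → q (φ a)` for every `a ∈ C`. -/
structure IsSemicovering (K : Type*) [Field K] {A B : Type*} [AddCommGroup A]
    [AddCommGroup B] {P G : Type*} [AddCommGroup P] [Module K P] [AddCommGroup G]
    [Module K G] (φ : A →+ B) (C : Set A) (p : A → Submodule K P) (brp : P → P → P)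
    (q : B → Submodule K G) (brg : G → G → G) (prj : P →ₗ[K] G) : Prop where
  suppC : ∀ a : A, a ∈ C ↔ p a ≠ ⊥
  phiC : ∀ b : B, ∃ a ∈ C, φ a = b
  prj_surj : Function.Surjective prj
  partial_hom : ∀ a b : A, a ∈ C → b ∈ C → a + b ∈ C →
    ∀ x ∈ p a, ∀ y ∈ p b, prj (brp x y) = brg (prj x) (prj y)
  maps : ∀ a ∈ C, ∀ x ∈ p a, prj x ∈ q (φ a)
  inj : ∀ a ∈ C, ∀ x ∈ p a, prj x = 0 → x = 0
  surj : ∀ a ∈ C, ∀ y ∈ q (φ a), ∃ x ∈ p a, prj x = y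

namespace DirectSum.IsInternal

variable {R ι M N P : Type*} [DecidableEq ι] [AddCommMonoid M] [AddCommMonoid N]
  [AddCommMonoid P]

section Semiring

variable [Semiring R] [Module R M] [Module R N] {A : ι → Submodule R M}

theorem linearMap_ext (hA : IsInternal A) {f g : M →ₗ[R] N}
    (h : ∀ i, ∀ x ∈ A i, f x = g x) : f = g :=
  LinearMap.eqLocus_eq_top.1 <| eq_top_iff.2 <|
    hA.submodule_iSup_eq_top ▸ iSup_le fun i x hx => h i x hx

noncomputable def lift_s14 (hA : IsInternal A) (f : ∀ i, A i →ₗ[R] N) : M →ₗ[R] N :=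
  toModule R ι N f ∘ₗ (LinearEquiv.ofBijective (coeLinearMap A) hA).symm.toLinearMap

theorem lift_apply_of_mem_s14 (hA : IsInternal A) (f : ∀ i, A i →ₗ[R] N) {i : ι} {x : M}
    (hx : x ∈ A i) : hA.lift_s14 f x = f i ⟨x, hx⟩ := by
  have hsymm : (LinearEquiv.ofBijective (coeLinearMap A) hA).symm x = lof R ι _ i ⟨x, hx⟩ :=
    (LinearEquiv.symm_apply_eq _).2 (coeLinearMap_of A i ⟨x, hx⟩).symm
  simp only [lift_s14, LinearMap.comp_apply, LinearEquiv.coe_coe, hsymm, toModule_lof]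

end Semiring

variable [CommSemiring R] [Module R M] [Module R N] [Module R P] {A : ι → Submodule R M}

theorem linearMap_ext₂ {B : ι → Submodule R N} (hA : IsInternal A) (hB : IsInternal B)
    {f g : M →ₗ[R] N →ₗ[R] P} (h : ∀ i j, ∀ x ∈ A i, ∀ y ∈ B j, f x y = g x y) : f = g :=
  hA.linearMap_ext fun i x hx => hB.linearMap_ext fun j y hy => h i j x hx y hy

end DirectSum.IsInternal

namespace IsGradedLieSuperAlg

variable {K A L : Type*} [Field K] [AddCommGroup A] [DecidableEq A] [AddCommGroup L]
  [Module K L] {δ : A →+ ZMod 2} {p : A → Submodule K L} {br : L → L → L}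

@[simp]
theorem bracket_apply (h : IsGradedLieSuperAlg K δ p br) (x y : L) : h.bracket x y = br x y :=
  rfl

theorem br_eq_zero_of_eq_bot (h : IsGradedLieSuperAlg K δ p br) {a b : A} {x y : L}
    (hx : x ∈ p a) (hy : y ∈ p b) (hab : p (a + b) = ⊥) : br x y = 0 :=
  (Submodule.eq_bot_iff _).1 hab _ (h.grade a b x hx y hy)

end IsGradedLieSuperAlg

namespace IsSemicovering

variable {K A B P G La : Type*} [Field K] [AddCommGroup A] [AddCommGroup B] [AddCommGroup P]
  [Module K P] [AddCommGroup G] [Module K G] [AddCommGroup La] [Module K La] {φ : A →+ B}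
  {C : Set A} {p : A → Submodule K P} {brp : P → P → P} {q : B → Submodule K G}
  {brg : G → G → G} {prj : P →ₗ[K] G} {pa : A → Submodule K La}

theorem eq_bot_of_notMem (hcov : IsSemicovering K φ C p brp q brg prj) {a : A} (ha : a ∉ C) :
    p a = ⊥ :=
  not_not.1 fun h => ha ((hcov.suppC a).2 h)

theorem eq_of_prj_eq (hcov : IsSemicovering K φ C p brp q brg prj) {a : A} (ha : a ∈ C)
    {x y : P} (hx : x ∈ p a) (hy : y ∈ p a) (hxy : prj x = prj y) : x = y :=
  sub_eq_zero.1 <| hcov.inj a ha _ (sub_mem hx hy) (by rw [map_sub, hxy, sub_self])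

noncomputable def componentEquiv (hcov : IsSemicovering K φ C p brp q brg prj) {a : A}
    (ha : a ∈ C) : p a ≃ₗ[K] q (φ a) :=
  LinearEquiv.ofBijective (prj.restrict (hcov.maps a ha))
    ⟨fun x y hxy => Subtype.ext (hcov.eq_of_prj_eq ha x.2 y.2 (congrArg Subtype.val hxy)),
      fun y => let ⟨x, hx, hxy⟩ := hcov.surj a ha y y.2; ⟨⟨x, hx⟩, Subtype.ext hxy⟩⟩

theorem prj_componentEquiv_symm (hcov : IsSemicovering K φ C p brp q brg prj) {a : A}
    (ha : a ∈ C) (y : q (φ a)) : prj ((hcov.componentEquiv ha).symm y) = y :=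
  congrArg Subtype.val ((hcov.componentEquiv ha).apply_symm_apply y)

variable [DecidableEq A]

theorem exists_graded_lift (hcov : IsSemicovering K φ C p brp q brg prj)
    (hint : DirectSum.IsInternal pa) (hsupp : ∀ a, a ∉ C → pa a = ⊥) (ψ : La →ₗ[K] G)
    (hψ : ∀ a, ∀ x ∈ pa a, ψ x ∈ q (φ a)) :
    ∃ Ψ : La →ₗ[K] P, (∀ a, ∀ x ∈ pa a, Ψ x ∈ p a) ∧ ∀ x, prj (Ψ x) = ψ x := by
  classical
  let f : ∀ a, pa a →ₗ[K] P := fun a =>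
    if ha : a ∈ C then (p a).subtype ∘ₗ (hcov.componentEquiv ha).symm.toLinearMap ∘ₗ
      ψ.restrict (hψ a)
    else 0
  refine ⟨hint.lift_s14 f, fun a x hx => ?_, LinearMap.congr_fun <| hint.linearMap_ext
    (f := prj ∘ₗ hint.lift_s14 f) fun a x hx => ?_⟩
  · rw [hint.lift_apply_of_mem_s14 f hx]
    by_cases ha : a ∈ C
    · simp only [f, dif_pos ha, LinearMap.comp_apply, Submodule.subtype_apply, SetLike.coe_mem]
    · simp only [f, dif_neg ha, LinearMap.zero_apply, zero_mem]
  · rw [LinearMap.comp_apply, hint.lift_apply_of_mem_s14 f hx]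
    by_cases ha : a ∈ C
    · simp only [f, dif_pos ha, LinearMap.comp_apply, Submodule.subtype_apply,
        LinearEquiv.coe_coe, prj_componentEquiv_symm, LinearMap.restrict_apply]
    · obtain rfl : x = 0 := (Submodule.mem_bot K).1 (hsupp a ha ▸ hx)
      simp only [f, dif_neg ha, LinearMap.zero_apply, map_zero]

theorem graded_ext (hcov : IsSemicovering K φ C p brp q brg prj)
    (hint : DirectSum.IsInternal pa) (hsupp : ∀ a, a ∉ C → pa a = ⊥) {Ψ₁ Ψ₂ : La →ₗ[K] P}
    (hΨ₁ : ∀ a, ∀ x ∈ pa a, Ψ₁ x ∈ p a) (hΨ₂ : ∀ a, ∀ x ∈ pa a, Ψ₂ x ∈ p a)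
    (h : ∀ x, prj (Ψ₁ x) = prj (Ψ₂ x)) : Ψ₁ = Ψ₂ :=
  hint.linearMap_ext fun a x hx => by
    by_cases ha : a ∈ C
    · exact hcov.eq_of_prj_eq ha (hΨ₁ a x hx) (hΨ₂ a x hx) (h x)
    · obtain rfl : x = 0 := (Submodule.mem_bot K).1 (hsupp a ha ▸ hx)
      simp only [map_zero]

theorem map_br_of_graded_lift (hcov : IsSemicovering K φ C p brp q brg prj)
    {δ : A →+ ZMod 2} (hp : IsGradedLieSuperAlg K δ p brp) {bra : La → La → La}
    (ha : IsGradedLieSuperAlg K δ pa bra) (hsupp : ∀ a, a ∉ C → pa a = ⊥)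
    {ψ : La →ₗ[K] G} (hψ : ∀ x y, ψ (bra x y) = brg (ψ x) (ψ y)) {Ψ : La →ₗ[K] P}
    (hΨgr : ∀ a, ∀ x ∈ pa a, Ψ x ∈ p a) (hΨprj : ∀ x, prj (Ψ x) = ψ x) (x y : La) :
    Ψ (bra x y) = brp (Ψ x) (Ψ y) := by
  suffices ha.bracket.compr₂ Ψ = hp.bracket.compl₁₂ Ψ Ψ from
    LinearMap.congr_fun₂ this x y
  refine DirectSum.IsInternal.linearMap_ext₂ ha.internal ha.internal fun s t x hx y hy => ?_
  by_cases hs : s ∈ C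
  swap
  · obtain rfl : x = 0 := (Submodule.mem_bot K).1 (hsupp s hs ▸ hx)
    simp only [map_zero, LinearMap.zero_apply]
  by_cases ht : t ∈ C
  swap
  · obtain rfl : y = 0 := (Submodule.mem_bot K).1 (hsupp t ht ▸ hy)
    simp only [map_zero]
  have hΨx := hΨgr s x hx
  have hΨy := hΨgr t y hy
  simp only [LinearMap.compr₂_apply, LinearMap.compl₁₂_apply, IsGradedLieSuperAlg.bracket_apply]
  by_cases hst : s + t ∈ C
  · refine hcov.eq_of_prj_eq hst (hΨgr _ _ (ha.grade s t x hx y hy))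
      (hp.grade s t _ hΨx _ hΨy) ?_
    rw [hΨprj, hψ, hcov.partial_hom s t hs ht hst _ hΨx _ hΨy, hΨprj, hΨprj]
  · rw [ha.br_eq_zero_of_eq_bot hx hy (hsupp _ hst), map_zero,
      hp.br_eq_zero_of_eq_bot hΨx hΨy (hcov.eq_bot_of_notMem hst)]

end IsSemicovering

namespace Stmt14

theorem semicovering_universal_property_general
    {K : Type*} [Field K] {A B : Type*} [AddCommGroup A] [AddCommGroup B]
    [DecidableEq A]
    {P G La : Type*} [AddCommGroup P] [Module K P] [AddCommGroup G] [Module K G]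
    [AddCommGroup La] [Module K La]
    (δ : B →+ ZMod 2) (φ : A →+ B) (C : Set A)
    (q : B → Submodule K G) (brg : G → G → G)
    (p : A → Submodule K P) (brp : P → P → P)
    (hp : IsGradedLieSuperAlg K (δ.comp φ) p brp)
    (prj : P →ₗ[K] G)
    (hcov : IsSemicovering K φ C p brp q brg prj)
    (pa : A → Submodule K La) (bra : La → La → La)
    (ha : IsGradedLieSuperAlg K (δ.comp φ) pa bra)
    (hasupp : ∀ a : A, a ∉ C → pa a = ⊥)
    (ψ : La →ₗ[K] G)
    (hψhom : ∀ x y, ψ (bra x y) = brg (ψ x) (ψ y))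
    (hψgr : ∀ a : A, ∀ x ∈ pa a, ψ x ∈ q (φ a)) :
    (∃! Ψ : La →ₗ[K] P,
      (∀ a : A, ∀ x ∈ pa a, Ψ x ∈ p a) ∧
      (∀ x y, Ψ (bra x y) = brp (Ψ x) (Ψ y)) ∧
      (∀ x, prj (Ψ x) = ψ x)) ∧
    (∀ Ψ : La →ₗ[K] P, (∀ a : A, ∀ x ∈ pa a, Ψ x ∈ p a) →
      ∀ s t : A, s ∈ C → t ∈ C → s + t ∉ C →
        ∀ x ∈ pa s, ∀ y ∈ pa t, brp (Ψ x) (Ψ y) = 0 ∧ Ψ (bra x y) = 0) := by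
  obtain ⟨Ψ, hΨgr, hΨprj⟩ := hcov.exists_graded_lift ha.internal hasupp ψ hψgr
  refine ⟨⟨Ψ, ⟨hΨgr, hcov.map_br_of_graded_lift hp ha hasupp hψhom hΨgr hΨprj, hΨprj⟩, ?_⟩, ?_⟩
  · rintro Ψ' ⟨hΨ'gr, -, hΨ'prj⟩
    exact hcov.graded_ext ha.internal hasupp hΨ'gr hΨgr fun x => (hΨ'prj x).trans (hΨprj x).symm
  · intro Ψ' hΨ'gr s t _ _ hst x hx y hy
    exact ⟨hp.br_eq_zero_of_eq_bot (hΨ'gr s x hx) (hΨ'gr t y hy) (hcov.eq_bot_of_notMem hst),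
      by rw [ha.br_eq_zero_of_eq_bot hx hy (hasupp _ hst), map_zero]⟩

/-- Let `φ : A → B` be a surjective homomorphism of abelian groups,
`C ⊆ A` with `φ(C) = B`, and `(𝔭, Π')` a `φ`-semicovering of a `B`-graded Lie
superalgebra `𝔤` with support `C`.  If `𝔞` is an `A`-graded Lie superalgebra with
`supp(𝔞) ⊆ C` and `ψ : 𝔞 → 𝔤` is a `B`-graded homomorphism, then there exists a unique
`A`-graded homomorphism `Ψ : 𝔞 → 𝔭` with `Π' ∘ Ψ = ψ`.  (In particular, for
`X ∈ 𝔞_s`, `Y ∈ 𝔞_t` with `s, t ∈ C` but `s + t ∉ C`, both `[Ψ(X), Ψ(Y)]` and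
`Ψ([X,Y])` vanish.) -/
theorem semicovering_universal_property
    {K : Type*} [Field K] {A B : Type*} [AddCommGroup A] [AddCommGroup B]
    [DecidableEq A] [DecidableEq B]
    {P G La : Type*} [AddCommGroup P] [Module K P] [AddCommGroup G] [Module K G]
    [AddCommGroup La] [Module K La]
    (δ : B →+ ZMod 2) (φ : A →+ B) (hφ : Function.Surjective φ) (C : Set A)
    (q : B → Submodule K G) (brg : G → G → G)
    (hg : IsGradedLieSuperAlg K δ q brg)
    (p : A → Submodule K P) (brp : P → P → P)
    (hp : IsGradedLieSuperAlg K (δ.comp φ) p brp)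
    (prj : P →ₗ[K] G)
    (hcov : IsSemicovering K φ C p brp q brg prj)
    (pa : A → Submodule K La) (bra : La → La → La)
    (ha : IsGradedLieSuperAlg K (δ.comp φ) pa bra)
    (hasupp : ∀ a : A, a ∉ C → pa a = ⊥)
    (ψ : La →ₗ[K] G)
    (hψhom : ∀ x y, ψ (bra x y) = brg (ψ x) (ψ y))
    (hψgr : ∀ a : A, ∀ x ∈ pa a, ψ x ∈ q (φ a)) :
    (∃! Ψ : La →ₗ[K] P,
      (∀ a : A, ∀ x ∈ pa a, Ψ x ∈ p a) ∧
      (∀ x y, Ψ (bra x y) = brp (Ψ x) (Ψ y)) ∧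
      (∀ x, prj (Ψ x) = ψ x)) ∧
    (∀ Ψ : La →ₗ[K] P, (∀ a : A, ∀ x ∈ pa a, Ψ x ∈ p a) →
      ∀ s t : A, s ∈ C → t ∈ C → s + t ∉ C →
        ∀ x ∈ pa s, ∀ y ∈ pa t, brp (Ψ x) (Ψ y) = 0 ∧ Ψ (bra x y) = 0) :=
  semicovering_universal_property_general δ φ C q brg p brp hp prj hcov pa bra ha hasupp ψ hψhom
    hψgr

end Stmt14
end
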